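/- Let S₁ and S₂ be two (real or complex) n×n invertible matrices that are semisimple (diagonalizable over ℂ) and such that every eigenvalue of S₁ and of S₂, written in polar form ρ e^{iθ} with ρ > 0, satisfies −π/2 < θ ≤ π/2. If S₁² = S₂², then S₁ = S₂. -/

import Mathlib

open Matrix

/-- A complex square matrix is semisimple iff it is diagonalizable over `ℂ`. -/
def IsSemisimpleMatC {n : ℕ} (S : Matrix (Fin n) (Fin n) ℂ) : Prop :=
  ∃ P D : Matrix (Fin n) (Fin n) ℂ, IsUnit P ∧ D.IsDiag ∧ S = P * D * P⁻¹

/-- A real square matrix is semisimple iff it is diagonalizable over `ℂ`. -/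
def IsSemisimpleMatR {n : ℕ} (S : Matrix (Fin n) (Fin n) ℝ) : Prop :=
  IsSemisimpleMatC (S.map (algebraMap ℝ ℂ))

/-- `z` is a (complex) eigenvalue of the complex matrix `S`. -/
def eigC {n : ℕ} (S : Matrix (Fin n) (Fin n) ℂ) (z : ℂ) : Prop :=
  S.charpoly.IsRoot z

/-- `z` is a (complex) eigenvalue of the real matrix `S`. -/
def eigR {n : ℕ} (S : Matrix (Fin n) (Fin n) ℝ) (z : ℂ) : Prop :=
  (S.charpoly.map (algebraMap ℝ ℂ)).IsRoot z

/-! If `S = P · diag(dᵢ) · P⁻¹` and a polynomial `p` satisfies `p(dᵢ²) = dᵢ` for all `i`, then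
`p(S²) = S`. When every `dᵢ` lies in the half plane `-π/2 < arg ≤ π/2`, it is the principal square
root of `dᵢ²`, so `p` can be chosen to interpolate the principal square root on the spectrum of
`S²`: a choice that depends on `S²` alone. Hence `S₁² = S₂²` gives `S₁ = p(S₁²) = p(S₂²) = S₂`.
Real matrices are handled by viewing them as complex ones. -/

open Polynomial

namespace Matrix

variable {m R : Type*} [Fintype m] [DecidableEq m] [CommRing R]

theorem aeval_diagonal (d : m → R) (p : R[X]) :
    aeval (diagonal d) p = diagonal fun i => p.eval (d i) := by
  rw [← diagonalAlgHom_apply (R := R), aeval_algHom_apply]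
  simp [aeval_fn_apply]

theorem aeval_units_conj (u : (Matrix m m R)ˣ) (A : Matrix m m R) (p : R[X]) :
    aeval (u * A * u⁻¹ : Matrix m m R) p = u * aeval A p * u⁻¹ := by
  simpa [ConjAct.units_smul_def] using aeval_smul p (ConjAct.toConjAct u) A

theorem aeval_conj_diagonal {P : Matrix m m R} (hP : IsUnit P) (d : m → R) (p : R[X]) :
    aeval (P * diagonal d * P⁻¹) p = P * diagonal (fun i => p.eval (d i)) * P⁻¹ := by
  obtain ⟨u, rfl⟩ := hP
  rw [← coe_units_inv, aeval_units_conj, aeval_diagonal]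

theorem eval_eq_zero_of_aeval_conj_diagonal_eq_zero {P : Matrix m m R} (hP : IsUnit P)
    {d : m → R} {p : R[X]} (h : aeval (P * diagonal d * P⁻¹) p = 0) (i : m) :
    p.eval (d i) = 0 := by
  obtain ⟨u, rfl⟩ := hP
  rw [aeval_conj_diagonal u.isUnit, ← coe_units_inv, Units.mul_left_eq_zero,
    Units.mul_right_eq_zero, diagonal_eq_zero] at h
  exact congrFun h i

end Matrix

section

variable {n : ℕ}

theorem eigC_of_conj_diagonal {P : Matrix (Fin n) (Fin n) ℂ} (hP : IsUnit P)
    (d : Fin n → ℂ) (i : Fin n) : eigC (P * diagonal d * P⁻¹) (d i) :=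
  eval_eq_zero_of_aeval_conj_diagonal_eq_zero hP (aeval_self_charpoly _) i

theorem eigR_iff_eigC_map (S : Matrix (Fin n) (Fin n) ℝ) (z : ℂ) :
    eigR S z ↔ eigC (S.map (algebraMap ℝ ℂ)) z := by
  rw [eigR, eigC, charpoly_map]

noncomputable def sqrtInterpolant (A : Matrix (Fin n) (Fin n) ℂ) : ℂ[X] :=
  Lagrange.interpolate A.charpoly.roots.toFinset id fun z => z ^ (2⁻¹ : ℂ)

theorem eval_sqrtInterpolant {A : Matrix (Fin n) (Fin n) ℂ} {z : ℂ} (hz : eigC A z) :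
    (sqrtInterpolant A).eval z = z ^ (2⁻¹ : ℂ) :=
  Lagrange.eval_interpolate_at_node _ (Set.injOn_id _) <|
    Multiset.mem_toFinset.2 <| (mem_roots (charpoly_monic A).ne_zero).2 hz

theorem aeval_sq_sqrtInterpolant_conj_diagonal {P : Matrix (Fin n) (Fin n) ℂ} (hP : IsUnit P)
    {d : Fin n → ℂ} (hd_arg : ∀ i, -(Real.pi / 2) < (d i).arg ∧ (d i).arg ≤ Real.pi / 2) :
    aeval ((P * diagonal d * P⁻¹) ^ 2) (sqrtInterpolant ((P * diagonal d * P⁻¹) ^ 2)) =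
      P * diagonal d * P⁻¹ := by
  have hsq : (P * diagonal d * P⁻¹) ^ 2 = P * diagonal (d ^ 2) * P⁻¹ := by
    have h := aeval_conj_diagonal hP d (X ^ 2)
    simpa [Pi.pow_def] using h
  have hsqrt (i : Fin n) :
      (sqrtInterpolant (P * diagonal (d ^ 2) * P⁻¹)).eval ((d ^ 2) i) = d i := by
    rw [eval_sqrtInterpolant (eigC_of_conj_diagonal hP (d ^ 2) i), Pi.pow_apply,
      Complex.pow_cpow_ofNat_inv (hd_arg i).1 (hd_arg i).2]
  rw [hsq, aeval_conj_diagonal hP]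
  simp only [hsqrt]

theorem aeval_sq_sqrtInterpolant {S : Matrix (Fin n) (Fin n) ℂ} (hS : IsSemisimpleMatC S)
    (hS_arg : ∀ z : ℂ, eigC S z → -(Real.pi / 2) < z.arg ∧ z.arg ≤ Real.pi / 2) :
    aeval (S ^ 2) (sqrtInterpolant (S ^ 2)) = S := by
  obtain ⟨P, D, hP, hD, rfl⟩ := hS
  rw [← hD.diagonal_diag] at hS_arg ⊢
  exact aeval_sq_sqrtInterpolant_conj_diagonal hP fun i => hS_arg _ (eigC_of_conj_diagonal hP _ i)

theorem eq_of_sq_eq_of_isSemisimpleMatC {S₁ S₂ : Matrix (Fin n) (Fin n) ℂ}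
    (h₁ : IsSemisimpleMatC S₁) (h₂ : IsSemisimpleMatC S₂)
    (h₁_arg : ∀ z : ℂ, eigC S₁ z → -(Real.pi / 2) < z.arg ∧ z.arg ≤ Real.pi / 2)
    (h₂_arg : ∀ z : ℂ, eigC S₂ z → -(Real.pi / 2) < z.arg ∧ z.arg ≤ Real.pi / 2)
    (hsq : S₁ ^ 2 = S₂ ^ 2) : S₁ = S₂ := by
  rw [← aeval_sq_sqrtInterpolant h₁ h₁_arg, ← aeval_sq_sqrtInterpolant h₂ h₂_arg, hsq]

end

/-- **Injectivity of squaring on semisimple invertible matrices with spectrum in the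
half plane `−π/2 < arg ≤ π/2`.** If `S₁, S₂` (real or complex `n × n`) are invertible
and semisimple, every eigenvalue `ρ e^{iθ}` (`ρ > 0`) of each satisfies
`−π/2 < θ ≤ π/2`, and `S₁² = S₂²`, then `S₁ = S₂`. -/
theorem sq_injective_on_semisimple_halfplane (n : ℕ) :
    (∀ S₁ S₂ : Matrix (Fin n) (Fin n) ℝ, IsUnit S₁ → IsUnit S₂ →
      IsSemisimpleMatR S₁ → IsSemisimpleMatR S₂ →
      (∀ z : ℂ, eigR S₁ z → -(Real.pi / 2) < z.arg ∧ z.arg ≤ Real.pi / 2) →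
      (∀ z : ℂ, eigR S₂ z → -(Real.pi / 2) < z.arg ∧ z.arg ≤ Real.pi / 2) →
      S₁ ^ 2 = S₂ ^ 2 → S₁ = S₂) ∧
    (∀ S₁ S₂ : Matrix (Fin n) (Fin n) ℂ, IsUnit S₁ → IsUnit S₂ →
      IsSemisimpleMatC S₁ → IsSemisimpleMatC S₂ →
      (∀ z : ℂ, eigC S₁ z → -(Real.pi / 2) < z.arg ∧ z.arg ≤ Real.pi / 2) →
      (∀ z : ℂ, eigC S₂ z → -(Real.pi / 2) < z.arg ∧ z.arg ≤ Real.pi / 2) →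
      S₁ ^ 2 = S₂ ^ 2 → S₁ = S₂) := by
  refine ⟨fun S₁ S₂ _ _ h₁ h₂ h₁_arg h₂_arg hsq => ?_,
    fun S₁ S₂ _ _ => eq_of_sq_eq_of_isSemisimpleMatC⟩
  apply map_injective (algebraMap ℝ ℂ).injective
  refine eq_of_sq_eq_of_isSemisimpleMatC h₁ h₂
    (fun z hz => h₁_arg z ((eigR_iff_eigC_map _ z).2 hz))
    (fun z hz => h₂_arg z ((eigR_iff_eigC_map _ z).2 hz)) ?_
  beta_reduce
  rw [← Matrix.map_pow, ← Matrix.map_pow, hsq]
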